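/- Let M be a rank-4 simple matroid containing a 4-element rank-2 modular flat L such that M / L is isomorphic to U_{2,5}. Then M has no triangle (3-element circuit) that is not contained in L. -/

import Mathlib

open Set Matroid

variable {α : Type*}

/-- The rank of a set in a matroid: the supremum of cardinalities of independent subsets. -/
noncomputable def mrk (M : Matroid α) (X : Set α) : ℕ :=
  sSup {n | ∃ I, M.Indep I ∧ I ⊆ X ∧ I.ncard = n}

/-- A set `X` is modular in `M` if the rank equality holds against every flat. -/
def IsModular (M : Matroid α) (X : Set α) : Prop :=
  ∀ F, M.IsFlat F → mrk M X + mrk M F = mrk M (X ∪ F) + mrk M (X ∩ F)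

/-- A matroid is simple if every subset of the ground set with at most two elements
is independent (no loops and no parallel pairs). -/
def MSimple (M : Matroid α) : Prop :=
  ∀ X ⊆ M.E, X.ncard ≤ 2 → M.Indep X

/-- Deletion of a set of elements. -/
def mdelete (M : Matroid α) (D : Set α) : Matroid α := M ↾ (M.E \ D)

/-- Contraction of a set of elements, defined by duality. -/
def mcontract (M : Matroid α) (C : Set α) : Matroid α := (M✶ ↾ (M.E \ C))✶

/-- `N` is a minor of `M` if it is obtained by a contraction followed by a deletion. -/
def IsMinorOf (N M : Matroid α) : Prop := ∃ C D, N = mdelete (mcontract M C) D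

/-- A matroid is connected: it has no 1-separation. -/
def MConnected (M : Matroid α) : Prop :=
  ∀ A B : Set α, A ∪ B = M.E → Disjoint A B → A.Nonempty → B.Nonempty →
    mrk M M.E + 1 ≤ mrk M A + mrk M B

/-- A matroid is 3-connected: connected with no 2-separation. -/
def ThreeConnected (M : Matroid α) : Prop :=
  MConnected M ∧ ∀ A B : Set α, A ∪ B = M.E → Disjoint A B →
    2 ≤ A.ncard → 2 ≤ B.ncard → mrk M M.E + 2 ≤ mrk M A + mrk M B

/-- `M` is (isomorphic to) the uniform matroid `U_{r,n}`. -/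
def IsUnif (M : Matroid α) (r n : ℕ) : Prop :=
  M.E.Finite ∧ M.E.ncard = n ∧ ∀ I ⊆ M.E, (M.Indep I ↔ I.ncard ≤ r)

/-- `M` has a `U_{r,n}`-minor. -/
def HasUnifMinor (M : Matroid α) (r n : ℕ) : Prop :=
  ∃ N, IsMinorOf N M ∧ IsUnif N r n

/-- `M` is (isomorphic to) the Fano matroid `F₇`: a simple rank-3 matroid on 7
elements in which every line has exactly 3 points. -/
def IsFano (M : Matroid α) : Prop :=
  M.E.Finite ∧ M.E.ncard = 7 ∧ MSimple M ∧ mrk M M.E = 3 ∧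
    ∀ L, M.IsFlat L → mrk M L = 2 → L.ncard = 3

/-- `L` is a 4-point line of `M`: a rank-2 flat that is the union of exactly
four rank-1 flats. -/
def FourPointLine (M : Matroid α) (L : Set α) : Prop :=
  M.IsFlat L ∧ mrk M L = 2 ∧
    ∃ f : Fin 4 → Set α, Function.Injective f ∧
      (∀ i, M.IsFlat (f i) ∧ mrk M (f i) = 1) ∧ L = ⋃ i, f i

/-- A circuit: a minimal dependent set. -/
def MCircuit (M : Matroid α) (C : Set α) : Prop :=
  C ⊆ M.E ∧ ¬ M.Indep C ∧ ∀ x ∈ C, M.Indep (C \ {x})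

/-- `M` is (isomorphic to) `P₆`: the 6-element simple rank-3 matroid with exactly
one triangle, whose complement is a triad. -/
def IsP6 (M : Matroid α) : Prop :=
  M.E.Finite ∧ M.E.ncard = 6 ∧ MSimple M ∧ mrk M M.E = 3 ∧
    ∃ T, MCircuit M T ∧ T.ncard = 3 ∧ MCircuit M✶ (M.E \ T) ∧
      ∀ T', MCircuit M T' → T'.ncard = 3 → T' = T

/-- `C` is a circuit-hyperplane of `M`. -/
def CircuitHyperplane (M : Matroid α) (C : Set α) : Prop :=
  MCircuit M C ∧ M.IsFlat C ∧ mrk M C + 1 = mrk M M.E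

/-- `N` is obtained from `M` by relaxing the circuit-hyperplane `C`. -/
def IsRelaxationOf (N M : Matroid α) (C : Set α) : Prop :=
  N.E = M.E ∧ CircuitHyperplane M C ∧ ∀ I ⊆ M.E, (N.Indep I ↔ (M.Indep I ∨ I = C))

/-- `N` is (isomorphic to) the non-Fano matroid `F₇⁻`: a relaxation of a
circuit-hyperplane of the Fano matroid. -/
def IsNonFano (N : Matroid α) : Prop :=
  ∃ (M : Matroid α) (C : Set α), IsFano M ∧ IsRelaxationOf N M C

/-- Isomorphism of matroids on the same ground type. -/
def IsIso (M N : Matroid α) : Prop :=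
  ∃ f : α → α, Set.InjOn f M.E ∧ f '' M.E = N.E ∧
    ∀ I ⊆ M.E, (M.Indep I ↔ N.Indep (f '' I))

/-- `M` is representable over the field `𝔽`. -/
def Representable (M : Matroid α) (𝔽 : Type) [Field 𝔽] : Prop :=
  ∃ (n : ℕ) (φ : α → (Fin n → 𝔽)), ∀ I ⊆ M.E,
    (M.Indep I ↔ LinearIndependent 𝔽 (I.restrict φ))

/-- `L` is a modular 4-point line of `M`. -/
def ModularFourPointLine (M : Matroid α) (L : Set α) : Prop :=
  FourPointLine M L ∧ IsModular M L

section RankToolkit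

private lemma mrk_bdd (M : Matroid α) (hE : M.E.Finite) (X : Set α) :
    BddAbove {n | ∃ I, M.Indep I ∧ I ⊆ X ∧ I.ncard = n} := by
  refine ⟨M.E.ncard, ?_⟩
  rintro n ⟨I, hI, -, rfl⟩
  exact Set.ncard_le_ncard hI.subset_ground hE

lemma ncard_le_mrk {M : Matroid α} (hE : M.E.Finite) {I X : Set α} (hI : M.Indep I)
    (hIX : I ⊆ X) : I.ncard ≤ mrk M X :=
  le_csSup (mrk_bdd M hE X) ⟨I, hI, hIX, rfl⟩

lemma exists_basis'_mrk (M : Matroid α) (hE : M.E.Finite) (X : Set α) :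
    ∃ I, M.IsBasis' I X ∧ I.ncard = mrk M X := by
  have hne : {n | ∃ I, M.Indep I ∧ I ⊆ X ∧ I.ncard = n}.Nonempty :=
    ⟨0, ∅, M.empty_indep, empty_subset X, Set.ncard_empty α⟩
  obtain ⟨I, hI, hIX, hIcard⟩ := Nat.sSup_mem hne (mrk_bdd M hE X)
  obtain ⟨J, hJ, hIJ⟩ := hI.subset_isBasis'_of_subset hIX
  have hJc : J.ncard ≤ mrk M X := ncard_le_mrk hE hJ.indep hJ.subset
  have hIJ' : I = J := Set.eq_of_subset_of_ncard_le hIJ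
    (by rw [hIcard]; exact hJc) (hE.subset hJ.indep.subset_ground)
  exact ⟨J, hJ, by rw [← hIJ', hIcard]; rfl⟩

lemma mrk_eq_of_basis' {M : Matroid α} (hE : M.E.Finite) {I X : Set α}
    (hI : M.IsBasis' I X) : mrk M X = I.ncard := by
  obtain ⟨J, hJ, hJc⟩ := exists_basis'_mrk M hE X
  rw [← hJc, Set.ncard_def, Set.ncard_def, hJ.encard_eq_encard hI]

lemma mrk_mono {M : Matroid α} (hE : M.E.Finite) {X Y : Set α} (h : X ⊆ Y) :
    mrk M X ≤ mrk M Y := by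
  obtain ⟨I, hI, hIc⟩ := exists_basis'_mrk M hE X
  rw [← hIc]
  exact ncard_le_mrk hE hI.indep (hI.subset.trans h)

lemma mrk_indep {M : Matroid α} (hE : M.E.Finite) {I : Set α} (hI : M.Indep I) :
    mrk M I = I.ncard :=
  mrk_eq_of_basis' hE hI.isBasis_self.isBasis'

lemma mrk_le_ncard {M : Matroid α} (hE : M.E.Finite) {X : Set α} (hX : X.Finite) :
    mrk M X ≤ X.ncard := by
  obtain ⟨I, hI, hIc⟩ := exists_basis'_mrk M hE X
  rw [← hIc]
  exact Set.ncard_le_ncard hI.subset hX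

lemma mrk_empty {M : Matroid α} (hE : M.E.Finite) : mrk M (∅ : Set α) = 0 := by
  have := mrk_le_ncard hE (M := M) (X := (∅ : Set α)) (Set.finite_empty)
  simpa using this

lemma mrk_closure {M : Matroid α} (hE : M.E.Finite) (X : Set α) :
    mrk M (M.closure X) = mrk M X := by
  obtain ⟨I, hI, hIc⟩ := exists_basis'_mrk M hE X
  rw [mrk_eq_of_basis' hE hI.isBasis_closure_right.isBasis']
  exact hIc

lemma mrk_le_of_subset_closure {M : Matroid α} (hE : M.E.Finite) {X Y : Set α}
    (h : X ⊆ M.closure Y) : mrk M X ≤ mrk M Y :=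
  (mrk_mono hE h).trans (le_of_eq (mrk_closure hE Y))

lemma mrk_insert_le {M : Matroid α} (hE : M.E.Finite) {X : Set α} (e : α) :
    mrk M (insert e X) ≤ mrk M X + 1 := by
  obtain ⟨I, hI, hIc⟩ := exists_basis'_mrk M hE (insert e X)
  rw [← hIc]
  have hfin : I.Finite := hE.subset hI.indep.subset_ground
  have h1 : I.ncard ≤ (I \ {e}).ncard + 1 := by
    have : I ⊆ insert e (I \ {e}) := by
      intro z hz; by_cases hze : z = e
      · exact hze ▸ mem_insert _ _
      · exact mem_insert_of_mem _ ⟨hz, hze⟩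
    exact (Set.ncard_le_ncard this (hfin.diff.insert e)).trans (Set.ncard_insert_le _ _)
  have h2 : (I \ {e}).ncard ≤ mrk M X := by
    refine ncard_le_mrk hE (hI.indep.diff {e}) ?_
    intro z hz
    rcases hI.subset hz.1 with h | h
    · exact absurd h hz.2
    · exact h
  omega

lemma mrk_insert_of_not_mem_closure {M : Matroid α} (hE : M.E.Finite) {X : Set α} {e : α}
    (he : e ∈ M.E) (hecl : e ∉ M.closure X) : mrk M (insert e X) = mrk M X + 1 := by
  refine le_antisymm (mrk_insert_le hE e) ?_
  obtain ⟨I, hI, hIc⟩ := exists_basis'_mrk M hE X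
  have hclI : M.closure I = M.closure X := hI.closure_eq_closure
  have heI : e ∉ I := fun h => hecl (hclI ▸ M.subset_closure I hI.indep.subset_ground h)
  have hind : M.Indep (insert e I) := by
    rw [hI.indep.insert_indep_iff_of_notMem heI, hclI]
    exact ⟨he, hecl⟩
  have hsub : insert e I ⊆ insert e X := insert_subset_insert hI.subset
  have := ncard_le_mrk hE hind hsub
  rwa [Set.ncard_insert_of_notMem heI (hE.subset hI.indep.subset_ground), hIc] at this

lemma mclosure_flat (M : Matroid α) (X : Set α) : M.IsFlat (M.closure X) := by
  refine ⟨fun I Y hIF hIY => ?_, M.closure_subset_ground X⟩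
  have h1 : M.closure I = M.closure (M.closure X) := hIF.closure_eq_closure
  have h2 := hIY.subset_closure
  rwa [h1, closure_closure] at h2

lemma flat_eq_closure_of_mrk_le {M : Matroid α} (hE : M.E.Finite) {F X : Set α}
    (hF : M.IsFlat F) (hXF : X ⊆ F) (hle : mrk M F ≤ mrk M X) : F = M.closure X := by
  have hcl : M.closure X ⊆ F := by
    have := M.closure_subset_closure hXF
    rwa [hF.closure] at this
  refine subset_antisymm ?_ hcl
  by_contra h
  obtain ⟨z, hzF, hzX⟩ := not_subset.1 h
  have h1 := mrk_insert_of_not_mem_closure hE (hF.subset_ground hzF) hzX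
  have h2 := mrk_mono hE (M := M) (insert_subset hzF hXF)
  omega

lemma mrk_dual_add (M : Matroid α) (hE : M.E.Finite) {X : Set α} (hX : X ⊆ M.E) :
    mrk M✶ X + mrk M M.E = X.ncard + mrk M (M.E \ X) := by
  have hEd : M✶.E.Finite := by rwa [dual_ground]
  have hXfin : X.Finite := hE.subset hX
  -- the ≥ direction
  obtain ⟨J, hJ⟩ := M.exists_isBasis' (M.E \ X)
  obtain ⟨B, hB, hJB⟩ := hJ.indep.exists_isBase_superset
  have hBfin : B.Finite := hE.subset hB.subset_ground
  have hrE : mrk M M.E = B.ncard := mrk_eq_of_basis' hE hB.isBasis_ground.isBasis'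
  have hrEX : mrk M (M.E \ X) = J.ncard := mrk_eq_of_basis' hE hJ
  have hBdiffX : J ⊆ B \ X := subset_diff.2 ⟨hJB, disjoint_left.2 (fun a ha => (hJ.subset ha).2)⟩
  have hBXcard : (B \ X).ncard = J.ncard := by
    refine le_antisymm ?_ (Set.ncard_le_ncard hBdiffX hBfin.diff)
    rw [← hrEX]
    exact ncard_le_mrk hE (hB.indep.diff X)
      (fun a ha => ⟨hB.subset_ground ha.1, ha.2⟩)
  have hge : X.ncard + mrk M (M.E \ X) ≤ mrk M✶ X + mrk M M.E := by
    have hXBind : M✶.Indep (X \ B) := by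
      rw [dual_indep_iff_exists (diff_subset.trans hX)]
      exact ⟨B, hB, disjoint_sdiff_left⟩
    have h1 : (X \ B).ncard ≤ mrk M✶ X := ncard_le_mrk hEd hXBind diff_subset
    have h2 : (X \ B).ncard + (X ∩ B).ncard = X.ncard := by
      have := Set.ncard_diff_add_ncard_of_subset (inter_subset_left (s := X) (t := B)) hXfin
      rwa [show X \ (X ∩ B) = X \ B by ext z; simp] at this
    have h3 : (B \ X).ncard + (B ∩ X).ncard = B.ncard := by
      have := Set.ncard_diff_add_ncard_of_subset (inter_subset_left (s := B) (t := X)) hBfin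
      rwa [show B \ (B ∩ X) = B \ X by ext z; simp] at this
    have h4 : (B ∩ X).ncard = (X ∩ B).ncard := by rw [inter_comm]
    omega
  -- the ≤ direction
  obtain ⟨I, hI, hIc⟩ := exists_basis'_mrk M✶ hEd X
  obtain ⟨hIE, B₀, hB₀, hIB₀⟩ := (dual_indep_iff_exists' (I := I)).1 hI.indep
  have hB₀fin : B₀.Finite := hE.subset hB₀.subset_ground
  have hle : mrk M✶ X + mrk M M.E ≤ X.ncard + mrk M (M.E \ X) := by
    have h1 : (B₀ \ X).ncard ≤ mrk M (M.E \ X) :=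
      ncard_le_mrk hE (hB₀.indep.diff X) (fun a ha => ⟨hB₀.subset_ground ha.1, ha.2⟩)
    have h2 : I.ncard + (B₀ ∩ X).ncard ≤ X.ncard := by
      rw [← Set.ncard_union_eq (disjoint_left.2 (fun a ha hb => disjoint_left.1 hIB₀ ha hb.1))
        (hE.subset hIE) ((hB₀fin.inter_of_left X))]
      exact Set.ncard_le_ncard (union_subset hI.subset inter_subset_right) hXfin
    have h3 : (B₀ ∩ X).ncard + (B₀ \ X).ncard = B₀.ncard := by
      have := Set.ncard_diff_add_ncard_of_subset (inter_subset_left (s := B₀) (t := X)) hB₀fin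
      rw [show B₀ \ (B₀ ∩ X) = B₀ \ X by ext z; simp] at this
      omega
    have h4 : mrk M M.E = B₀.ncard := mrk_eq_of_basis' hE hB₀.isBasis_ground.isBasis'
    omega
  omega

lemma mrk_restrict (M : Matroid α) {R X : Set α} (hXR : X ⊆ R) :
    mrk (M ↾ R) X = mrk M X := by
  unfold mrk
  congr 1
  ext n
  constructor
  · rintro ⟨I, hI, hIX, rfl⟩
    exact ⟨I, hI.of_restrict, hIX, rfl⟩
  · rintro ⟨I, hI, hIX, rfl⟩
    exact ⟨I, hI.indep_restrict_of_subset (hIX.trans hXR), hIX, rfl⟩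

lemma mcontract_ground (M : Matroid α) (L : Set α) : (mcontract M L).E = M.E \ L := rfl

lemma mrk_mcontract_add (M : Matroid α) (hE : M.E.Finite) {L X : Set α} (hL : L ⊆ M.E)
    (hX : X ⊆ M.E \ L) : mrk (mcontract M L) X + mrk M L = mrk M (X ∪ L) := by
  set G := M.E \ L with hG
  have hGE : G ⊆ M.E := diff_subset
  have hGfin : G.Finite := hE.subset hGE
  set N₀ := M✶ ↾ G with hN₀
  have hN₀fin : N₀.E.Finite := hGfin
  have hEd : M✶.E.Finite := hE
  have eq1 := mrk_dual_add N₀ hN₀fin (X := X) hX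
  have eq2 := mrk_dual_add M hE (X := G) hGE
  have eq3 := mrk_dual_add M hE (X := G \ X) (diff_subset.trans hGE)
  have hr1 : mrk N₀ N₀.E = mrk M✶ G := mrk_restrict M✶ Subset.rfl
  have hr2 : mrk N₀ (N₀.E \ X) = mrk M✶ (G \ X) := mrk_restrict M✶ diff_subset
  have hs1 : M.E \ G = L := Set.diff_diff_cancel_left hL
  have hs2 : M.E \ (G \ X) = X ∪ L := by
    ext z
    constructor
    · rintro ⟨hzE, hz⟩
      by_cases hzX : z ∈ X
      · exact Or.inl hzX
      · right
        by_contra hzL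
        exact hz ⟨⟨hzE, hzL⟩, hzX⟩
    · rintro (hzX | hzL)
      · exact ⟨(hX hzX).1, fun h => h.2 hzX⟩
      · exact ⟨hL hzL, fun h => h.1.2 hzL⟩
  have hnc : (G \ X).ncard + X.ncard = G.ncard :=
    Set.ncard_diff_add_ncard_of_subset hX hGfin
  have heq : mrk (mcontract M L) X = mrk N₀✶ X := rfl
  rw [heq]
  rw [hr1, hr2] at eq1
  rw [hs1] at eq2
  rw [hs2] at eq3
  omega

lemma msimple_pair_indep {M : Matroid α} (hs : MSimple M) {a b : α}
    (ha : a ∈ M.E) (hb : b ∈ M.E) : M.Indep {a, b} := by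
  refine hs _ ?_ ?_
  · exact insert_subset ha (singleton_subset_iff.2 hb)
  · exact (Set.ncard_insert_le a {b}).trans (by simp)

lemma msimple_singleton_indep {M : Matroid α} (hs : MSimple M) {a : α}
    (ha : a ∈ M.E) : M.Indep {a} :=
  hs _ (singleton_subset_iff.2 ha) (by simp)

lemma mrk_pair {M : Matroid α} (hE : M.E.Finite) (hs : MSimple M) {a b : α}
    (ha : a ∈ M.E) (hb : b ∈ M.E) (hab : a ≠ b) : mrk M {a, b} = 2 := by
  rw [mrk_indep hE (msimple_pair_indep hs ha hb), Set.ncard_pair hab]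

lemma eq_empty_of_mrk_zero {M : Matroid α} (hE : M.E.Finite) (hs : MSimple M) {Z : Set α}
    (hZ : Z ⊆ M.E) (h : mrk M Z = 0) : Z = ∅ := by
  rw [eq_empty_iff_forall_notMem]
  intro g hg
  have := ncard_le_mrk hE (msimple_singleton_indep hs (hZ hg)) (singleton_subset_iff.2 hg)
  simp [h] at this

lemma eq_singleton_of_mrk_one {M : Matroid α} (hE : M.E.Finite) (hs : MSimple M) {Z : Set α}
    (hZ : Z ⊆ M.E) (h : mrk M Z = 1) : ∃ g, Z = {g} := by
  obtain ⟨I, hI, hIc⟩ := exists_basis'_mrk M hE Z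
  rw [h] at hIc
  obtain ⟨g, rfl⟩ := Set.ncard_eq_one.1 hIc
  have hgZ : g ∈ Z := hI.subset rfl
  refine ⟨g, subset_antisymm ?_ (singleton_subset_iff.2 hgZ)⟩
  intro z hz
  by_contra hzg
  have hzg' : g ≠ z := fun h' => hzg h'.symm
  have := ncard_le_mrk hE (msimple_pair_indep hs (hZ hgZ) (hZ hz))
    (insert_subset hgZ (singleton_subset_iff.2 hz))
  rw [Set.ncard_pair hzg', h] at this
  omega

lemma circuit_mem_closure_diff {M : Matroid α} {C : Set α} {x : α}
    (hC : MCircuit M C) (hx : x ∈ C) : x ∈ M.closure (C \ {x}) := by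
  have hI : M.Indep (C \ {x}) := hC.2.2 x hx
  have hdep : M.Dep (insert x (C \ {x})) := by
    rw [insert_diff_singleton, insert_eq_of_mem hx]
    exact ⟨hC.2.1, hC.1⟩
  exact (hI.insert_dep_iff.1 hdep).1

lemma circuit_mrk_two {M : Matroid α} (hE : M.E.Finite) {C : Set α}
    (hC : MCircuit M C) (h3 : C.ncard = 3) : mrk M C = 2 := by
  have hCfin : C.Finite := hE.subset hC.1
  have hne : C.Nonempty := Set.nonempty_of_ncard_ne_zero (by omega)
  obtain ⟨x, hx⟩ := hne
  have hge : 2 ≤ mrk M C := by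
    have h1 := ncard_le_mrk hE (hC.2.2 x hx) (diff_subset (s := C) (t := {x}))
    rwa [Set.ncard_diff_singleton_of_mem hx, h3] at h1
  have hle : mrk M C ≤ 2 := by
    obtain ⟨I, hI, hIc⟩ := exists_basis'_mrk M hE C
    have hIC : I ≠ C := fun h => hC.2.1 (h ▸ hI.indep)
    have := Set.ncard_lt_ncard (ssubset_of_subset_of_ne hI.subset hIC) hCfin
    omega
  omega

end RankToolkit

/-- In a 3-connected rank-4 simple matroid with a 4-element rank-2 modular flat `L`
such that `M / L ≅ U_{2,5}`, every triangle is contained in `L`. -/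
theorem stmt19 (M : Matroid α) (hfin : M.E.Finite) (hs : MSimple M)
    (h3 : ThreeConnected M) (hr : mrk M M.E = 4) (L : Set α)
    (hLflat : M.IsFlat L) (hLcard : L.ncard = 4) (hLrk : mrk M L = 2)
    (hmod : IsModular M L) (hcon : IsUnif (mcontract M L) 2 5) :
    ∀ C, MCircuit M C → C.ncard = 3 → C ⊆ L := by
  intro C hC hC3
  by_contra hCL
  have hLE : L ⊆ M.E := hLflat.subset_ground
  have hCE : C ⊆ M.E := hC.1
  have hCfin : C.Finite := hfin.subset hCE
  have hEL5 : (M.E \ L).ncard = 5 := by rw [← mcontract_ground M L]; exact hcon.2.1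
  have hNfin : (mcontract M L).E.Finite := hcon.1
  -- rank of L with any two points outside L is 4
  have hpair : ∀ p q : α, p ∈ M.E \ L → q ∈ M.E \ L → p ≠ q → mrk M ({p, q} ∪ L) = 4 := by
    intro p q hp hq hpq
    have hsub : ({p, q} : Set α) ⊆ M.E \ L := insert_subset hp (singleton_subset_iff.2 hq)
    have hind : (mcontract M L).Indep {p, q} :=
      (hcon.2.2 _ (by rw [mcontract_ground]; exact hsub)).2 (by rw [Set.ncard_pair hpq])
    have h1 : mrk (mcontract M L) {p, q} = 2 := by
      rw [mrk_indep hNfin hind, Set.ncard_pair hpq]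
    have h2 := mrk_mcontract_add M hfin hLE hsub
    rw [h1, hLrk] at h2
    omega
  -- lines spanned by two points outside L are disjoint from L
  have hline : ∀ p q : α, p ∈ M.E \ L → q ∈ M.E \ L → p ≠ q →
      L ∩ M.closure {p, q} = ∅ := by
    intro p q hp hq hpq
    have hpqE : ({p, q} : Set α) ⊆ M.E := insert_subset hp.1 (singleton_subset_iff.2 hq.1)
    have hmod' := hmod _ (mclosure_flat M {p, q})
    rw [hLrk, mrk_closure hfin, mrk_pair hfin hs hp.1 hq.1 hpq] at hmod'
    have h4 : 4 ≤ mrk M (L ∪ M.closure {p, q}) := by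
      rw [← hpair p q hp hq hpq]
      refine mrk_mono hfin (union_subset ?_ subset_union_left)
      exact (M.subset_closure _ hpqE).trans subset_union_right
    have h0 : mrk M (L ∩ M.closure {p, q}) = 0 := by omega
    exact eq_empty_of_mrk_zero hfin hs (inter_subset_left.trans hLE) h0
  -- every rank-3 flat spanning 4 with L meets L in exactly one point
  have hplane : ∀ P : Set α, M.IsFlat P → mrk M P = 3 → 4 ≤ mrk M (L ∪ P) →
      ∃ g, L ∩ P = {g} := by
    intro P hP h3p h4
    have hmod' := hmod P hP
    rw [hLrk, h3p] at hmod'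
    have hle : mrk M (L ∪ P) ≤ 4 := by
      rw [← hr]; exact mrk_mono hfin (union_subset hLE hP.subset_ground)
    have h1 : mrk M (L ∩ P) = 1 := by omega
    exact eq_singleton_of_mrk_one hfin hs (inter_subset_left.trans hLE) h1
  have hrkC : mrk M C = 2 := circuit_mrk_two hfin hC hC3
  have hFflat : M.IsFlat (M.closure C) := mclosure_flat M C
  have hFE : M.closure C ⊆ M.E := hFflat.subset_ground
  have hrkF : mrk M (M.closure C) = 2 := by rw [mrk_closure hfin, hrkC]
  have hCF : C ⊆ M.closure C := M.subset_closure C hCE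
  have hmodF := hmod (M.closure C) hFflat
  rw [hLrk, hrkF] at hmodF
  rcases eq_empty_or_nonempty (L ∩ M.closure C) with hLF | hLF
  swap
  · -- Case 1 : the line of C meets L
    obtain ⟨g, hg⟩ := hLF
    have hg1 : 1 ≤ mrk M (L ∩ M.closure C) := by
      have h1 := ncard_le_mrk hfin (msimple_singleton_indep hs (hLE hg.1))
        (singleton_subset_iff.2 hg)
      simpa using h1
    have hLC3 : mrk M (L ∪ C) ≤ 3 := by
      have := mrk_mono hfin (union_subset_union_right L hCF)
      omega
    obtain ⟨p, hpC, hpL⟩ := not_subset.1 hCL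
    by_cases hrest : C \ {p} ⊆ L
    · have h1 := circuit_mem_closure_diff hC hpC
      have h2 := M.closure_subset_closure hrest
      rw [hLflat.closure] at h2
      exact hpL (h2 h1)
    · obtain ⟨q, hqC, hqL⟩ := not_subset.1 hrest
      have hpq : p ≠ q := fun h => hqC.2 (by rw [← h]; rfl)
      have h4 := hpair p q ⟨hCE hpC, hpL⟩ ⟨hCE hqC.1, hqL⟩ hpq
      have hsub : ({p, q} : Set α) ∪ L ⊆ L ∪ C := by
        rw [union_comm]
        exact union_subset_union_right L (insert_subset hpC (singleton_subset_iff.2 hqC.1))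
      have := mrk_mono hfin hsub
      omega
  -- Case 2 : the line of C is disjoint from L
  have hnL : ∀ z ∈ L, z ∉ M.closure C := by
    intro z hz hzF
    have : z ∈ L ∩ M.closure C := ⟨hz, hzF⟩
    rw [hLF] at this
    exact this
  have hLF0 : mrk M (L ∩ M.closure C) = 0 := by rw [hLF, mrk_empty hfin]
  have hLuF : mrk M (L ∪ M.closure C) = 4 := by
    have hle : mrk M (L ∪ M.closure C) ≤ 4 := by
      rw [← hr]; exact mrk_mono hfin (union_subset hLE hFE)
    omega
  have hLC4 : mrk M (L ∪ C) = 4 := by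
    have hle : mrk M (L ∪ C) ≤ 4 := by
      rw [← hr]; exact mrk_mono hfin (union_subset hLE hCE)
    have hsub : L ∪ M.closure C ⊆ M.closure (L ∪ C) := by
      refine union_subset ?_ (M.closure_subset_closure subset_union_right)
      exact M.subset_closure_of_subset subset_union_left (union_subset hLE hCE)
    have h4le : 4 ≤ mrk M (L ∪ C) := by
      rw [← hLuF]; exact mrk_le_of_subset_closure hfin hsub
    omega
  have hFEL : M.closure C ⊆ M.E \ L := fun z hz => ⟨hFE hz, fun hzL => hnL z hzL hz⟩
  have hunion : M.E \ L = M.closure C ∪ ((M.E \ L) \ M.closure C) :=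
    (union_diff_cancel hFEL).symm
  have hELfin : (M.E \ L).Finite := hfin.subset diff_subset
  have hFfin : (M.closure C).Finite := hfin.subset hFE
  have hSfin : ((M.E \ L) \ M.closure C).Finite := hELfin.diff
  have hcardFS : (M.closure C).ncard + ((M.E \ L) \ M.closure C).ncard = 5 := by
    have := Set.ncard_diff_add_ncard_of_subset hFEL hELfin
    omega
  have hCn : 3 ≤ (M.closure C).ncard := by
    rw [← hC3]; exact Set.ncard_le_ncard hCF hFfin
  by_cases hS1 : ((M.E \ L) \ M.closure C).ncard ≤ 1
  · -- few points outside L ∪ cl C : contradiction with 3-connectivity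
    have hBeq : M.E \ M.closure C = L ∪ ((M.E \ L) \ M.closure C) := by
      ext z
      constructor
      · rintro ⟨hzE, hzF⟩
        by_cases hzL : z ∈ L
        · exact Or.inl hzL
        · exact Or.inr ⟨⟨hzE, hzL⟩, hzF⟩
      · rintro (hzL | hzS)
        · exact ⟨hLE hzL, hnL z hzL⟩
        · exact ⟨hzS.1.1, hzS.2⟩
    have hrS : mrk M (L ∪ ((M.E \ L) \ M.closure C)) ≤ 3 := by
      rcases (Set.ncard_le_one_iff_eq hSfin).1 hS1 with h | ⟨a, h⟩
      · rw [h, union_empty, hLrk]; omega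
      · rw [h, union_singleton]
        have := mrk_insert_le hfin (M := M) (X := L) a
        omega
    have hnB : 2 ≤ (M.E \ M.closure C).ncard := by
      rw [hBeq]
      have : L.ncard ≤ (L ∪ ((M.E \ L) \ M.closure C)).ncard :=
        Set.ncard_le_ncard subset_union_left ((hfin.subset hLE).union hSfin)
      omega
    have happ := h3.2 (M.closure C) (M.E \ M.closure C) (union_diff_cancel hFE)
      disjoint_sdiff_right (by omega) hnB
    rw [hr] at happ
    have h5 : mrk M (M.E \ M.closure C) ≤ 3 := by rw [hBeq]; exact hrS
    omega
  -- now exactly two points x, y outside L ∪ cl C, and cl C = C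
  have hS2 : ((M.E \ L) \ M.closure C).ncard = 2 := by omega
  have hFC : C = M.closure C := Set.eq_of_subset_of_ncard_le hCF (by omega) hFfin
  obtain ⟨x, y, hxy, hSxy⟩ := Set.ncard_eq_two.1 hS2
  have hxS : x ∈ (M.E \ L) \ M.closure C := by rw [hSxy]; exact mem_insert _ _
  have hyS : y ∈ (M.E \ L) \ M.closure C := by rw [hSxy]; exact mem_insert_of_mem _ rfl
  have hxEL : x ∈ M.E \ L := hxS.1
  have hyEL : y ∈ M.E \ L := hyS.1
  have hxE : x ∈ M.E := hxEL.1
  have hyE : y ∈ M.E := hyEL.1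
  have hxF : x ∉ M.closure C := hxS.2
  have hyF : y ∉ M.closure C := hyS.2
  have hEL : M.E \ L = C ∪ {x, y} := by
    rw [hunion, hSxy, ← hFC]
  -- sub-case : the plane through C and one of the new points contains the other
  have subA : ∀ a b : α, a ∈ M.E \ L → a ∉ M.closure C → M.E \ L = C ∪ {a, b} →
      b ∈ M.closure (insert a C) → False := by
    intro a b ha haF hEq hbP
    have hiaCE : insert a C ⊆ M.E := insert_subset ha.1 hCE
    have hPflat : M.IsFlat (M.closure (insert a C)) := mclosure_flat M (insert a C)
    have hPE : M.closure (insert a C) ⊆ M.E := hPflat.subset_ground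
    have hrP : mrk M (M.closure (insert a C)) = 3 := by
      rw [mrk_closure hfin, mrk_insert_of_not_mem_closure hfin ha.1 haF, hrkC]
    have hCP : C ⊆ M.closure (insert a C) :=
      (subset_insert a C).trans (M.subset_closure _ hiaCE)
    have haP : a ∈ M.closure (insert a C) := M.subset_closure _ hiaCE (mem_insert a C)
    have h4 : 4 ≤ mrk M (L ∪ M.closure (insert a C)) := by
      rw [← hLC4]
      exact mrk_mono hfin (union_subset_union_right L hCP)
    obtain ⟨e, heP⟩ := hplane _ hPflat hrP h4
    have heLP : e ∈ L ∩ M.closure (insert a C) := by rw [heP]; rfl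
    have hBeq : M.E \ M.closure (insert a C) = L \ {e} := by
      ext z
      constructor
      · rintro ⟨hzE, hzP⟩
        have hzL : z ∈ L := by
          by_contra hzL
          have hz2 : z ∈ C ∪ {a, b} := by rw [← hEq]; exact ⟨hzE, hzL⟩
          rcases hz2 with h | h
          · exact hzP (hCP h)
          · rcases h with h | h
            · exact hzP (by rw [show z = a from h]; exact haP)
            · exact hzP (by rw [show z = b from h]; exact hbP)
        exact ⟨hzL, fun h => hzP (by rw [show z = e from h]; exact heLP.2)⟩
      · rintro ⟨hzL, hze⟩
        refine ⟨hLE hzL, fun hzP => hze ?_⟩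
        have hmem : z ∈ L ∩ M.closure (insert a C) := ⟨hzL, hzP⟩
        rw [heP] at hmem
        exact hmem
    have hnP : 2 ≤ (M.closure (insert a C)).ncard := by
      have h1 : 3 ≤ (M.closure (insert a C)).ncard := by
        rw [← hC3]; exact Set.ncard_le_ncard hCP (hfin.subset hPE)
      omega
    have hnB : 2 ≤ (M.E \ M.closure (insert a C)).ncard := by
      rw [hBeq, Set.ncard_diff_singleton_of_mem heLP.1, hLcard]; omega
    have happ := h3.2 _ _ (union_diff_cancel hPE) disjoint_sdiff_right hnP hnB
    rw [hr] at happ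
    have h5 : mrk M (M.E \ M.closure (insert a C)) ≤ 2 := by
      rw [hBeq, ← hLrk]
      exact mrk_mono hfin diff_subset
    omega
  by_cases hyFx : y ∈ M.closure (insert x C)
  · exact subA x y hxEL hxF hEL hyFx
  by_cases hxFy : x ∈ M.closure (insert y C)
  · exact subA y x hyEL hyF (by rw [hEL, Set.pair_comm]) hxFy
  -- main case : two skew planes
  have hixCE : insert x C ⊆ M.E := insert_subset hxE hCE
  have hiyCE : insert y C ⊆ M.E := insert_subset hyE hCE
  have hFxflat : M.IsFlat (M.closure (insert x C)) := mclosure_flat M _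
  have hFyflat : M.IsFlat (M.closure (insert y C)) := mclosure_flat M _
  have hrxset : mrk M (insert x C) = 3 := by
    rw [mrk_insert_of_not_mem_closure hfin hxE hxF, hrkC]
  have hryset : mrk M (insert y C) = 3 := by
    rw [mrk_insert_of_not_mem_closure hfin hyE hyF, hrkC]
  have hrFx : mrk M (M.closure (insert x C)) = 3 := by rw [mrk_closure hfin, hrxset]
  have hrFy : mrk M (M.closure (insert y C)) = 3 := by rw [mrk_closure hfin, hryset]
  have hCFx : C ⊆ M.closure (insert x C) :=
    (subset_insert x C).trans (M.subset_closure _ hixCE)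
  have hCFy : C ⊆ M.closure (insert y C) :=
    (subset_insert y C).trans (M.subset_closure _ hiyCE)
  have hxFx : x ∈ M.closure (insert x C) := M.subset_closure _ hixCE (mem_insert x C)
  have hyFy : y ∈ M.closure (insert y C) := M.subset_closure _ hiyCE (mem_insert y C)
  obtain ⟨e, heFx⟩ := hplane _ hFxflat hrFx
    (by rw [← hLC4]; exact mrk_mono hfin (union_subset_union_right L hCFx))
  obtain ⟨f, hfFy⟩ := hplane _ hFyflat hrFy
    (by rw [← hLC4]; exact mrk_mono hfin (union_subset_union_right L hCFy))
  have heL : e ∈ L := by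
    have : e ∈ L ∩ M.closure (insert x C) := by rw [heFx]; rfl
    exact this.1
  have heFx' : e ∈ M.closure (insert x C) := by
    have : e ∈ L ∩ M.closure (insert x C) := by rw [heFx]; rfl
    exact this.2
  have hfL : f ∈ L := by
    have : f ∈ L ∩ M.closure (insert y C) := by rw [hfFy]; rfl
    exact this.1
  have hfFy' : f ∈ M.closure (insert y C) := by
    have : f ∈ L ∩ M.closure (insert y C) := by rw [hfFy]; rfl
    exact this.2
  -- e ≠ f
  have hef : e ≠ f := by
    intro hefeq
    have hreC : mrk M (insert e C) = 3 := by
      rw [mrk_insert_of_not_mem_closure hfin (hLE heL) (hnL e heL), hrkC]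
    have h1 : M.closure (insert x C) = M.closure (insert e C) :=
      flat_eq_closure_of_mrk_le hfin hFxflat (insert_subset heFx' hCFx)
        (by rw [hrFx, hreC])
    have h2 : M.closure (insert y C) = M.closure (insert e C) :=
      flat_eq_closure_of_mrk_le hfin hFyflat
        (insert_subset (by rw [← hefeq] at hfFy'; exact hfFy') hCFy)
        (by rw [hrFy, hreC])
    exact hyFx (by rw [h1, ← h2]; exact hyFy)
  have hCEL : C ⊆ M.E \ L := by rw [hEL]; exact subset_union_left
  -- properties of the planes through x, y and a point of C
  have hTcE : ∀ c ∈ C, insert y ({c, x} : Set α) ⊆ M.E := fun c hc =>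
    insert_subset hyE (insert_subset (hCE hc) (singleton_subset_iff.2 hxE))
  have hcx : ∀ c ∈ C, c ≠ x := fun c hc h => hxF (by rw [← h]; exact hCF hc)
  have hcy : ∀ c ∈ C, c ≠ y := fun c hc h => hyF (by rw [← h]; exact hCF hc)
  have hyncl : ∀ c ∈ C, y ∉ M.closure {c, x} := by
    intro c hc hy
    apply hyFx
    refine M.closure_subset_closure (show ({c, x} : Set α) ⊆ insert x C from ?_) hy
    exact insert_subset (mem_insert_of_mem _ hc) (singleton_subset_iff.2 (mem_insert _ _))
  have hrT : ∀ c ∈ C, mrk M (insert y ({c, x} : Set α)) = 3 := by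
    intro c hc
    rw [mrk_insert_of_not_mem_closure hfin hyE (hyncl c hc),
      mrk_pair hfin hs (hCE hc) hxE (hcx c hc)]
  have hrQ : ∀ c ∈ C, mrk M (M.closure (insert y ({c, x} : Set α))) = 3 := by
    intro c hc
    rw [mrk_closure hfin, hrT c hc]
  have hcQ : ∀ c ∈ C, c ∈ M.closure (insert y ({c, x} : Set α)) := fun c hc =>
    M.subset_closure _ (hTcE c hc) (mem_insert_of_mem _ (mem_insert _ _))
  have hxQ : ∀ c ∈ C, x ∈ M.closure (insert y ({c, x} : Set α)) := fun c hc =>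
    M.subset_closure _ (hTcE c hc) (mem_insert_of_mem _ (mem_insert_of_mem _ rfl))
  have hyQ : ∀ c ∈ C, y ∈ M.closure (insert y ({c, x} : Set α)) := fun c hc =>
    M.subset_closure _ (hTcE c hc) (mem_insert _ _)
  have key : ∀ c ∈ C, ∃ g, L ∩ M.closure (insert y ({c, x} : Set α)) = {g} := by
    intro c hc
    refine hplane _ (mclosure_flat M _) (hrQ c hc) ?_
    rw [← hpair x y hxEL hyEL hxy, union_comm ({x, y} : Set α) L]
    refine mrk_mono hfin (union_subset_union_right L ?_)
    intro z hz
    rcases hz with h | h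
    · rw [show z = x from h]; exact hxQ c hc
    · rw [show z = y from h]; exact hyQ c hc
  -- the point of a plane Q_c is not e
  have hgne : ∀ c ∈ C, ∀ g, L ∩ M.closure (insert y ({c, x} : Set α)) = {g} → g ≠ e := by
    intro c hc g hg hge
    rw [hge] at hg
    have heQ : e ∈ M.closure (insert y ({c, x} : Set α)) := by
      have : e ∈ L ∩ M.closure (insert y ({c, x} : Set α)) := by rw [hg]; rfl
      exact this.2
    have hecx : e ∉ M.closure {c, x} := by
      intro h
      have : e ∈ L ∩ M.closure {c, x} := ⟨heL, h⟩
      rw [hline c x (hCEL hc) hxEL (hcx c hc)] at this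
      exact this
    have hrA : mrk M (insert e ({c, x} : Set α)) = 3 := by
      rw [mrk_insert_of_not_mem_closure hfin (hLE heL) hecx,
        mrk_pair hfin hs (hCE hc) hxE (hcx c hc)]
    have hQA : M.closure (insert y ({c, x} : Set α)) = M.closure (insert e ({c, x} : Set α)) :=
      flat_eq_closure_of_mrk_le hfin (mclosure_flat M _)
        (insert_subset heQ (insert_subset (hcQ c hc) (singleton_subset_iff.2 (hxQ c hc))))
        (by rw [hrQ c hc, hrA])
    have hFxA : M.closure (insert x C) = M.closure (insert e ({c, x} : Set α)) :=
      flat_eq_closure_of_mrk_le hfin hFxflat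
        (insert_subset heFx' (insert_subset (hCFx hc) (singleton_subset_iff.2 hxFx)))
        (by rw [hrFx, hrA])
    exact hyFx (by rw [hFxA, ← hQA]; exact hyQ c hc)
  -- the point of a plane Q_c is not f
  have hgnf : ∀ c ∈ C, ∀ g, L ∩ M.closure (insert y ({c, x} : Set α)) = {g} → g ≠ f := by
    intro c hc g hg hgf
    rw [hgf] at hg
    have hfQ : f ∈ M.closure (insert y ({c, x} : Set α)) := by
      have : f ∈ L ∩ M.closure (insert y ({c, x} : Set α)) := by rw [hg]; rfl
      exact this.2
    have hfcy : f ∉ M.closure {c, y} := by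
      intro h
      have : f ∈ L ∩ M.closure {c, y} := ⟨hfL, h⟩
      rw [hline c y (hCEL hc) hyEL (hcy c hc)] at this
      exact this
    have hrA : mrk M (insert f ({c, y} : Set α)) = 3 := by
      rw [mrk_insert_of_not_mem_closure hfin (hLE hfL) hfcy,
        mrk_pair hfin hs (hCE hc) hyE (hcy c hc)]
    have hQA : M.closure (insert y ({c, x} : Set α)) = M.closure (insert f ({c, y} : Set α)) :=
      flat_eq_closure_of_mrk_le hfin (mclosure_flat M _)
        (insert_subset hfQ (insert_subset (hcQ c hc) (singleton_subset_iff.2 (hyQ c hc))))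
        (by rw [hrQ c hc, hrA])
    have hFyA : M.closure (insert y C) = M.closure (insert f ({c, y} : Set α)) :=
      flat_eq_closure_of_mrk_le hfin hFyflat
        (insert_subset hfFy' (insert_subset (hCFy hc) (singleton_subset_iff.2 hyFy)))
        (by rw [hrFy, hrA])
    exact hxFy (by rw [hFyA, ← hQA]; exact hxQ c hc)
  -- the points of distinct planes Q_c are distinct
  have hginj : ∀ c c' z : α, C = {c, c', z} → ∀ g,
      L ∩ M.closure (insert y ({c, x} : Set α)) = {g} →
      L ∩ M.closure (insert y ({c', x} : Set α)) = {g} → False := by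
    intro c c' z hCeq g hg1 hg2
    have hc : c ∈ C := by rw [hCeq]; exact mem_insert _ _
    have hc' : c' ∈ C := by rw [hCeq]; exact mem_insert_of_mem _ (mem_insert _ _)
    have hz : z ∈ C := by rw [hCeq]; exact mem_insert_of_mem _ (mem_insert_of_mem _ rfl)
    have hgL : g ∈ L := by
      have : g ∈ L ∩ M.closure (insert y ({c, x} : Set α)) := by rw [hg1]; rfl
      exact this.1
    have hgQ1 : g ∈ M.closure (insert y ({c, x} : Set α)) := by
      have : g ∈ L ∩ M.closure (insert y ({c, x} : Set α)) := by rw [hg1]; rfl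
      exact this.2
    have hgQ2 : g ∈ M.closure (insert y ({c', x} : Set α)) := by
      have : g ∈ L ∩ M.closure (insert y ({c', x} : Set α)) := by rw [hg2]; rfl
      exact this.2
    have hgxy : g ∉ M.closure {x, y} := by
      intro h
      have : g ∈ L ∩ M.closure {x, y} := ⟨hgL, h⟩
      rw [hline x y hxEL hyEL hxy] at this
      exact this
    have hrA : mrk M (insert g ({x, y} : Set α)) = 3 := by
      rw [mrk_insert_of_not_mem_closure hfin (hLE hgL) hgxy, mrk_pair hfin hs hxE hyE hxy]
    have hQ1A : M.closure (insert y ({c, x} : Set α)) = M.closure (insert g ({x, y} : Set α)) :=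
      flat_eq_closure_of_mrk_le hfin (mclosure_flat M _)
        (insert_subset hgQ1 (insert_subset (hxQ c hc) (singleton_subset_iff.2 (hyQ c hc))))
        (by rw [hrQ c hc, hrA])
    have hQ2A : M.closure (insert y ({c', x} : Set α)) = M.closure (insert g ({x, y} : Set α)) :=
      flat_eq_closure_of_mrk_le hfin (mclosure_flat M _)
        (insert_subset hgQ2 (insert_subset (hxQ c' hc') (singleton_subset_iff.2 (hyQ c' hc'))))
        (by rw [hrQ c' hc', hrA])
    have hc'Q : c' ∈ M.closure (insert y ({c, x} : Set α)) := by
      rw [hQ1A, ← hQ2A]; exact hcQ c' hc'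
    have hzcl : z ∈ M.closure {c, c'} := by
      have h1 := circuit_mem_closure_diff hC hz
      refine M.closure_subset_closure (show C \ {z} ⊆ {c, c'} from ?_) h1
      intro w hw
      have hwC : w ∈ ({c, c', z} : Set α) := by rw [← hCeq]; exact hw.1
      rcases hwC with h | h | h
      · exact Or.inl h
      · exact Or.inr h
      · exact absurd h hw.2
    have hzQ : z ∈ M.closure (insert y ({c, x} : Set α)) := by
      have hsub : ({c, c'} : Set α) ⊆ M.closure (insert y ({c, x} : Set α)) :=
        insert_subset (hcQ c hc) (singleton_subset_iff.2 hc'Q)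
      have h2 := M.closure_subset_closure hsub
      rw [(mclosure_flat M (insert y ({c, x} : Set α))).closure] at h2
      exact h2 hzcl
    have hCQ : C ⊆ M.closure (insert y ({c, x} : Set α)) := by
      rw [hCeq]
      exact insert_subset (hcQ c hc) (insert_subset hc'Q (singleton_subset_iff.2 hzQ))
    have hQFx : M.closure (insert y ({c, x} : Set α)) = M.closure (insert x C) := by
      have h1 : M.closure (insert y ({c, x} : Set α)) = M.closure (insert x C) :=
        (flat_eq_closure_of_mrk_le hfin (mclosure_flat M _)
          (insert_subset (hxQ c hc) hCQ) (by rw [hrQ c hc, hrxset])).trans rfl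
      exact h1
    exact hyFx (by rw [← hQFx]; exact hyQ c hc)
  -- assemble the contradiction : five distinct points in L
  obtain ⟨c1, c2, c3, h12, h13, h23, hCeq⟩ := Set.ncard_eq_three.1 hC3
  have hc1 : c1 ∈ C := by rw [hCeq]; exact mem_insert _ _
  have hc2 : c2 ∈ C := by rw [hCeq]; exact mem_insert_of_mem _ (mem_insert _ _)
  have hc3 : c3 ∈ C := by rw [hCeq]; exact mem_insert_of_mem _ (mem_insert_of_mem _ rfl)
  obtain ⟨g1, hg1⟩ := key c1 hc1
  obtain ⟨g2, hg2⟩ := key c2 hc2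
  obtain ⟨g3, hg3⟩ := key c3 hc3
  have hgmemL : ∀ g c, c ∈ C → L ∩ M.closure (insert y ({c, x} : Set α)) = {g} → g ∈ L := by
    intro g c hc hg
    have : g ∈ L ∩ M.closure (insert y ({c, x} : Set α)) := by rw [hg]; rfl
    exact this.1
  have hCeq132 : C = {c1, c3, c2} := by rw [hCeq]; ext w; simp; tauto
  have hCeq231 : C = {c2, c3, c1} := by rw [hCeq]; ext w; simp; tauto
  have hg12 : g1 ≠ g2 := fun h => hginj c1 c2 c3 hCeq g1 hg1 (by rw [h]; exact hg2)
  have hg13 : g1 ≠ g3 := fun h => hginj c1 c3 c2 hCeq132 g1 hg1 (by rw [h]; exact hg3)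
  have hg23 : g2 ≠ g3 := fun h => hginj c2 c3 c1 hCeq231 g2 hg2 (by rw [h]; exact hg3)
  have hg1e : g1 ≠ e := hgne c1 hc1 g1 hg1
  have hg2e : g2 ≠ e := hgne c2 hc2 g2 hg2
  have hg3e : g3 ≠ e := hgne c3 hc3 g3 hg3
  have hg1f : g1 ≠ f := hgnf c1 hc1 g1 hg1
  have hg2f : g2 ≠ f := hgnf c2 hc2 g2 hg2
  have hg3f : g3 ≠ f := hgnf c3 hc3 g3 hg3
  have hKsub : ({e, f, g1, g2, g3} : Set α) ⊆ L := by
    intro w hw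
    rcases hw with h | h | h | h | h
    · rw [show w = e from h]; exact heL
    · rw [show w = f from h]; exact hfL
    · rw [show w = g1 from h]; exact hgmemL g1 c1 hc1 hg1
    · rw [show w = g2 from h]; exact hgmemL g2 c2 hc2 hg2
    · rw [show w = g3 from h]; exact hgmemL g3 c3 hc3 hg3
  have hK5 : ({e, f, g1, g2, g3} : Set α).ncard = 5 := by
    rw [Set.ncard_insert_of_notMem (by simp [hef, Ne.symm hg1e, Ne.symm hg2e, Ne.symm hg3e]),
      Set.ncard_insert_of_notMem (by simp [Ne.symm hg1f, Ne.symm hg2f, Ne.symm hg3f]),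
      Set.ncard_insert_of_notMem (by simp [hg12, hg13]),
      Set.ncard_insert_of_notMem (by simp [hg23]), Set.ncard_singleton]
  have hKle := Set.ncard_le_ncard hKsub (hfin.subset hLE)
  rw [hK5, hLcard] at hKle
  omega
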